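/- Let η ≥ 2 be a real number and set C̃ := 1 + η(η−1)/2. Then for every real z ≥ −1 one has (η(η−1)/2)·z² − C̃·|z| + 1 ≤ (1+z)^η. -/

import Mathlib

/-!
Write `q = η(η-1)/2`. For `z ≤ 0` the left-hand side factors as `(1 + q z)(1 + z)`, and
`(1 + z)^η = (1 + z)^(η-1) (1 + z) ≥ (1 + (η-1) z)(1 + z)` by Bernoulli's inequality, which
suffices because `q ≥ η - 1`. For `z ≥ 0` the left-hand side is at most `1 + q z²`, and
`(1 + z)^η - q z²` is increasing: its derivative `η ((1 + z)^(η-1) - (η-1) z)` is at least `η`,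
again by Bernoulli.
-/

open Real Set

namespace Real

theorem one_add_mul_sq_le_rpow_one_add {p z : ℝ} (hp : 2 ≤ p) (hz : 0 ≤ z) :
    1 + p * (p - 1) / 2 * z ^ 2 ≤ (1 + z) ^ p := by
  let g : ℝ → ℝ := fun x ↦ (1 + x) ^ p - p * (p - 1) / 2 * x ^ 2
  have hg : ∀ x, 0 ≤ x → HasDerivAt g (p * (1 + x) ^ (p - 1) - p * (p - 1) * x) x := by
    intro x hx
    have hbase : HasDerivAt (fun x : ℝ ↦ 1 + x) 1 x := (hasDerivAt_id x).const_add 1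
    exact ((hbase.rpow_const (Or.inl (by linarith))).sub
      ((hasDerivAt_pow 2 x).const_mul (p * (p - 1) / 2))).congr_deriv (by norm_num; ring)
  have hmono : MonotoneOn g (Ici 0) := by
    refine monotoneOn_of_hasDerivWithinAt_nonneg (convex_Ici 0)
      (fun x hx ↦ (hg x hx).continuousAt.continuousWithinAt)
      (fun x hx ↦ (hg x (interior_subset hx)).hasDerivWithinAt) fun x hx ↦ ?_
    rw [interior_Ici, mem_Ioi] at hx
    have bernoulli : 1 + (p - 1) * x ≤ (1 + x) ^ (p - 1) :=
      one_add_mul_self_le_rpow_one_add (by linarith) (by linarith)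
    nlinarith
  have := hmono self_mem_Ici hz hz
  simp only [g, add_zero, one_rpow] at this
  linarith

theorem one_add_mul_mul_one_add_le_rpow_one_add {p q z : ℝ} (hp : 2 ≤ p) (hq : p - 1 ≤ q)
    (hz₁ : -1 ≤ z) (hz₀ : z ≤ 0) :
    (1 + q * z) * (1 + z) ≤ (1 + z) ^ p := by
  have hpos : 0 ≤ 1 + z := by linarith
  calc (1 + q * z) * (1 + z) ≤ (1 + (p - 1) * z) * (1 + z) :=
      mul_le_mul_of_nonneg_right (by nlinarith) hpos
    _ ≤ (1 + z) ^ (p - 1) * (1 + z) :=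
      mul_le_mul_of_nonneg_right (one_add_mul_self_le_rpow_one_add hz₁ (by linarith)) hpos
    _ = (1 + z) ^ p := by rw [← rpow_add_one' hpos (by linarith), sub_add_cancel]

end Real

theorem stmt_5 (η : ℝ) (hη : 2 ≤ η) :
    let Ctilde : ℝ := 1 + η * (η - 1) / 2
    ∀ z : ℝ, -1 ≤ z →
      (η * (η - 1) / 2) * z ^ 2 - Ctilde * |z| + 1 ≤ (1 + z) ^ η := by
  intro Ctilde z hz
  simp only [Ctilde]
  rcases le_total 0 z with hz₀ | hz₀
  · rw [abs_of_nonneg hz₀]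
    have hq : 0 ≤ η * (η - 1) / 2 := by nlinarith
    have := one_add_mul_sq_le_rpow_one_add hη hz₀
    nlinarith [mul_nonneg hq hz₀]
  · rw [abs_of_nonpos hz₀]
    have := one_add_mul_mul_one_add_le_rpow_one_add hη (q := η * (η - 1) / 2) (by nlinarith) hz hz₀
    linarith
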